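/- Let α : X → Set(M X) be a map whose values are non-empty convex subsets of M X. Then for all x ∈ X and ψ ∈ M X: x ⇒_α ψ if and only if ψ ∈ α*(x), where α*(x) := ⋃_{n ≥ 0} (α ∨ 1)ⁿ(x). -/

import Mathlib

open scoped NNReal Pointwise

/-- `M X`: finitely supported functions `X →₀ ℝ≥0`. -/
abbrev M (X : Type*) : Type _ := X →₀ ℝ≥0

/-- Kleisli composition of the monad `CM`:
`(g·f)(x) = ⋃_{φ ∈ f(x)} ∑_{y ∈ supp(φ)} φ(y) • g(y)`, where the finite sum of sets is the
Minkowski sum (the empty sum being `{0}`). -/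
noncomputable def kcompCM {X Y Z : Type*} (g : Y → Set (M Z)) (f : X → Set (M Y)) :
    X → Set (M Z) :=
  fun x => ⋃ φ ∈ f x, ∑ y ∈ φ.support, φ y • g y

/-- The unit of the monad `CM`: `1(x) = {δ_x}`. -/
noncomputable def oneCM (X : Type*) : X → Set (M X) :=
  fun x => {Finsupp.single x 1}

/-- `(α ∨ 1)(x) = conv(α(x) ∪ {δ_x})`. -/
noncomputable def orOne {X : Type*} (α : X → Set (M X)) : X → Set (M X) :=
  fun x => convexHull ℝ≥0 (α x ∪ {Finsupp.single x 1})

/-- Kleisli powers of a `CM`-coalgebra. -/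
noncomputable def kpowCM {X : Type*} (β : X → Set (M X)) : ℕ → X → Set (M X)
  | 0 => oneCM X
  | n + 1 => kcompCM β (kpowCM β n)

/-- The inductively defined relation `x ⇒ⁿ_α ψ`. -/
inductive Steps {X : Type*} (α : X → Set (M X)) : ℕ → X → M X → Prop
  | zero (x : X) : Steps α 0 x (Finsupp.single x 1)
  | succ {n : ℕ} {x : X} (φ : M X) (hφ : φ ∈ α x) (ψ : X → M X)
      (hψ : ∀ y ∈ φ.support, Steps α n y (ψ y)) {ψ' : M X} (hψ' : Steps α n x ψ')
      (p : ℝ≥0) (hp : p ≤ 1) :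
      Steps α (n + 1) x (p • (∑ y ∈ φ.support, φ y • ψ y) + (1 - p) • ψ')

/-! Kleisli composition of maps with non-empty convex values is associative, because convexity
lets a mixture `∑ᵢ cᵢ • g^#(φᵢ)` of Kleisli extensions (`kextCM g φᵢ`) be merged into the single
extension `g^#(∑ᵢ cᵢ • φᵢ)`. Hence `(α ∨ 1)ⁿ⁺¹ = (α ∨ 1)ⁿ · (α ∨ 1)`: a point of `(α ∨ 1)ⁿ⁺¹(x)`
arises from one `(α ∨ 1)`-step at `x` followed by `(α ∨ 1)ⁿ` at every point reached. Since `α(x)`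
is convex, `(α ∨ 1)(x)` consists of the mixtures `p • φ + (1 - p) • δ_x` with `φ ∈ α(x)`, which is
the shape of the rule producing `x ⇒ⁿ⁺¹_α`; conversely, the two continuations of that rule are
merged by the same convexity argument. -/

section Semifield

variable {𝕜 E : Type*} [Semifield 𝕜] [LinearOrder 𝕜] [IsStrictOrderedRing 𝕜]
  [AddCommMonoid E] [Module 𝕜 E] {s t : Set E}

theorem Convex.exists_mem_add_smul_eq₀ (hs : Convex 𝕜 s) {x y : E} (hx : x ∈ s) (hy : y ∈ s)
    {p q : 𝕜} (hp : 0 ≤ p) (hq : 0 ≤ q) : ∃ z ∈ s, (p + q) • z = p • x + q • y := by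
  by_cases hpq : p + q = 0
  · obtain ⟨rfl, rfl⟩ := (add_eq_zero_iff_of_nonneg hp hq).1 hpq
    exact ⟨x, hx, by simp⟩
  refine ⟨(p / (p + q)) • x + (q / (p + q)) • y,
    hs hx hy (div_nonneg hp (add_nonneg hp hq)) (div_nonneg hq (add_nonneg hp hq))
      (by rw [← add_div, div_self hpq]), ?_⟩
  rw [smul_add, smul_smul, smul_smul, mul_div_cancel₀ _ hpq, mul_div_cancel₀ _ hpq]

theorem Convex.convexJoin₀ (hs : Convex 𝕜 s) (ht : Convex 𝕜 t) :
    Convex 𝕜 (convexJoin 𝕜 s t) := by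
  simp only [Convex, StarConvex, mem_convexJoin]
  rintro _ ⟨x₁, hx₁, y₁, hy₁, a₁, b₁, ha₁, hb₁, hab₁, rfl⟩
    _ ⟨x₂, hx₂, y₂, hy₂, a₂, b₂, ha₂, hb₂, hab₂, rfl⟩ p q hp hq hpq
  obtain ⟨x, hx, hx_eq⟩ :=
    hs.exists_mem_add_smul_eq₀ hx₁ hx₂ (mul_nonneg hp ha₁) (mul_nonneg hq ha₂)
  obtain ⟨y, hy, hy_eq⟩ :=
    ht.exists_mem_add_smul_eq₀ hy₁ hy₂ (mul_nonneg hp hb₁) (mul_nonneg hq hb₂)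
  refine ⟨x, hx, y, hy, p * a₁ + q * a₂, p * b₁ + q * b₂, by positivity, by positivity,
    by linear_combination p * hab₁ + q * hab₂ + hpq, ?_⟩
  rw [hx_eq, hy_eq, smul_add, smul_add, smul_smul, smul_smul, smul_smul, smul_smul]
  abel

theorem Convex.convexHull_union₀ (hs : Convex 𝕜 s) (ht : Convex 𝕜 t) (hs₀ : s.Nonempty)
    (ht₀ : t.Nonempty) : convexHull 𝕜 (s ∪ t) = convexJoin 𝕜 s t :=
  (convexHull_min (Set.union_subset (subset_convexJoin_left ht₀) (subset_convexJoin_right hs₀))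
    (hs.convexJoin₀ ht)).antisymm (convexJoin_subset_convexHull s t)

end Semifield

section KleisliExtension

variable {Y Z : Type*}

noncomputable def kextCM (g : Y → Set (M Z)) (φ : M Y) : Set (M Z) :=
  ∑ y ∈ φ.support, φ y • g y

theorem mem_kcompCM {X : Type*} {g : Y → Set (M Z)} {f : X → Set (M Y)} {x : X} {u : M Z} :
    u ∈ kcompCM g f x ↔ ∃ φ ∈ f x, u ∈ kextCM g φ := by
  simp [kcompCM, kextCM]

theorem kextCM_single (g : Y → Set (M Z)) (y : Y) : kextCM g (Finsupp.single y 1) = g y := by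
  simp [kextCM]

theorem kextCM_mono {g g' : Y → Set (M Z)} (h : ∀ y, g y ⊆ g' y) (φ : M Y) :
    kextCM g φ ⊆ kextCM g' φ :=
  Set.finsetSum_subset_finsetSum _ _ _ fun y _ => Set.smul_set_mono (h y)

theorem sum_smul_mem_kextCM {g : Y → Set (M Z)} {φ : M Y} {γ : Y → M Z}
    (hγ : ∀ y ∈ φ.support, γ y ∈ g y) : ∑ y ∈ φ.support, φ y • γ y ∈ kextCM g φ :=
  Set.finsetSum_mem_finsetSum _ _ _ fun y hy => Set.smul_mem_smul_set (hγ y hy)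

theorem exists_eq_sum_smul_of_mem_kextCM {g : Y → Set (M Z)} (hg : ∀ y, (g y).Nonempty)
    {φ : M Y} {u : M Z} (hu : u ∈ kextCM g φ) :
    ∃ γ : Y → M Z, (∀ y, γ y ∈ g y) ∧ u = ∑ y ∈ φ.support, φ y • γ y := by
  classical
  obtain ⟨v, hv, rfl⟩ := (Set.mem_finsetSum _ _ _).1 hu
  choose! γ hγ hγv using fun y (hy : y ∈ φ.support) => Set.mem_smul_set.1 (hv hy)
  refine ⟨fun y => if y ∈ φ.support then γ y else (hg y).some, fun y => ?_,
    Finset.sum_congr rfl fun y hy => by simp only [if_pos hy, hγv y hy]⟩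
  by_cases hy : y ∈ φ.support
  · simpa only [if_pos hy] using hγ y hy
  · simpa only [if_neg hy] using (hg y).some_mem

theorem nonempty_kextCM {g : Y → Set (M Z)} (hg : ∀ y, (g y).Nonempty) (φ : M Y) :
    (kextCM g φ).Nonempty :=
  ⟨_, sum_smul_mem_kextCM fun y _ => (hg y).some_mem⟩

theorem kextCM_oneCM (φ : M Y) : kextCM (oneCM Y) φ = {φ} := by
  simp only [kextCM, oneCM, Set.smul_set_singleton, Finsupp.smul_single_one,
    Set.finsetSum_singleton]
  exact congrArg _ φ.sum_single

end KleisliExtension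

section Mixtures

variable {Y Z : Type*} {S : Y → Set (M Z)}

theorem sum_support_smul_eq_of_subset {N : Type*} [AddCommMonoid N] [Module ℝ≥0 N] {φ : M Y}
    {U : Finset Y} (hU : φ.support ⊆ U) (γ : Y → N) :
    ∑ y ∈ φ.support, φ y • γ y = ∑ y ∈ U, φ y • γ y :=
  φ.sum_of_support_subset hU (fun y c => c • γ y) fun _ _ => zero_smul _ _

theorem add_smul_kextCM_subset (hS : ∀ y, (S y).Nonempty ∧ Convex ℝ≥0 (S y))
    (φ φ' : M Y) (t s : ℝ≥0) :
    t • kextCM S φ + s • kextCM S φ' ⊆ kextCM S (t • φ + s • φ') := by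
  classical
  rintro _ ⟨_, ⟨u, hu, rfl⟩, _, ⟨v, hv, rfl⟩, rfl⟩
  obtain ⟨a, ha, rfl⟩ := exists_eq_sum_smul_of_mem_kextCM (fun y => (hS y).1) hu
  obtain ⟨b, hb, rfl⟩ := exists_eq_sum_smul_of_mem_kextCM (fun y => (hS y).1) hv
  -- pointwise, `(tφ + sφ')(y) • m y` is the mixture of `a y` and `b y` with weights `tφ(y), sφ'(y)`
  choose m hm hm_eq using fun y =>
    (hS y).2.exists_mem_add_smul_eq₀ (ha y) (hb y) (p := t * φ y) (q := s * φ' y) zero_le zero_le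
  have hU : (t • φ + s • φ').support ⊆ φ.support ∪ φ'.support :=
    Finsupp.support_add.trans (Finset.union_subset_union Finsupp.support_smul
      Finsupp.support_smul)
  have hsum : t • ∑ y ∈ φ.support, φ y • a y + s • ∑ y ∈ φ'.support, φ' y • b y =
      ∑ y ∈ (t • φ + s • φ').support, (t • φ + s • φ') y • m y := by
    rw [sum_support_smul_eq_of_subset hU, sum_support_smul_eq_of_subset
      Finset.subset_union_left a, sum_support_smul_eq_of_subset Finset.subset_union_right b,
      Finset.smul_sum, Finset.smul_sum, ← Finset.sum_add_distrib]
    simp only [Finsupp.add_apply, Finsupp.smul_apply, smul_eq_mul, hm_eq, smul_smul]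
  beta_reduce
  rw [hsum]
  exact sum_smul_mem_kextCM fun y _ => hm y

theorem sum_smul_kextCM_subset (hS : ∀ y, (S y).Nonempty ∧ Convex ℝ≥0 (S y)) {ι : Type*}
    (I : Finset ι) (c : ι → ℝ≥0) (γ : ι → M Y) :
    ∑ i ∈ I, c i • kextCM S (γ i) ⊆ kextCM S (∑ i ∈ I, c i • γ i) := by
  classical
  induction I using Finset.induction_on with
  | empty => simp [kextCM]
  | insert i I hi ih =>
    rw [Finset.sum_insert hi, Finset.sum_insert hi]
    calc c i • kextCM S (γ i) + ∑ j ∈ I, c j • kextCM S (γ j)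
        ⊆ c i • kextCM S (γ i) + (1 : ℝ≥0) • kextCM S (∑ j ∈ I, c j • γ j) := by
          rw [one_smul]; exact Set.add_subset_add_left ih
      _ ⊆ kextCM S (c i • γ i + (1 : ℝ≥0) • ∑ j ∈ I, c j • γ j) :=
          add_smul_kextCM_subset hS _ _ _ _
      _ = kextCM S (c i • γ i + ∑ j ∈ I, c j • γ j) := by rw [one_smul]

theorem kextCM_kextCM (hS : ∀ y, (S y).Nonempty ∧ Convex ℝ≥0 (S y)) {X : Type*}
    (φ : M X) (γ : X → M Y) :
    kextCM (fun x => kextCM S (γ x)) φ = kextCM S (∑ x ∈ φ.support, φ x • γ x) := by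
  refine (sum_smul_kextCM_subset hS _ _ _).antisymm fun u hu => ?_
  obtain ⟨w, hw, rfl⟩ := exists_eq_sum_smul_of_mem_kextCM (fun y => (hS y).1) hu
  have hlin := Finsupp.linearCombination_linearCombination (R := ℝ≥0) w γ φ
  simp only [Finsupp.linearCombination_apply, Finsupp.sum] at hlin
  rw [hlin]
  exact sum_smul_mem_kextCM fun x _ => sum_smul_mem_kextCM fun y _ => hw y

end Mixtures

section KleisliComposition

variable {X Y Z W : Type*}

theorem kcompCM_oneCM (g : X → Set (M Y)) : kcompCM g (oneCM X) = g := by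
  funext x
  simp [kcompCM, oneCM]

theorem oneCM_kcompCM (f : X → Set (M Y)) : kcompCM (oneCM Y) f = f := by
  funext x
  ext u
  simp [mem_kcompCM, kextCM_oneCM]

theorem nonempty_kcompCM {g : Y → Set (M Z)} {f : X → Set (M Y)} (hg : ∀ y, (g y).Nonempty)
    (hf : ∀ x, (f x).Nonempty) (x : X) : (kcompCM g f x).Nonempty :=
  let ⟨φ, hφ⟩ := hf x
  let ⟨u, hu⟩ := nonempty_kextCM hg φ
  ⟨u, mem_kcompCM.2 ⟨φ, hφ, hu⟩⟩

theorem convex_kcompCM {g : Y → Set (M Z)} {f : X → Set (M Y)}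
    (hg : ∀ y, (g y).Nonempty ∧ Convex ℝ≥0 (g y)) {x : X} (hf : Convex ℝ≥0 (f x)) :
    Convex ℝ≥0 (kcompCM g f x) := by
  intro u hu v hv t s _ _ hts
  obtain ⟨φ, hφ, hu⟩ := mem_kcompCM.1 hu
  obtain ⟨φ', hφ', hv⟩ := mem_kcompCM.1 hv
  exact mem_kcompCM.2 ⟨t • φ + s • φ', hf hφ hφ' zero_le zero_le hts,
    add_smul_kextCM_subset hg φ φ' t s (Set.add_mem_add (Set.smul_mem_smul_set hu)
      (Set.smul_mem_smul_set hv))⟩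

theorem kcompCM_assoc {h : Z → Set (M W)} {g : Y → Set (M Z)} (f : X → Set (M Y))
    (hh : ∀ z, (h z).Nonempty ∧ Convex ℝ≥0 (h z)) (hg : ∀ y, (g y).Nonempty) :
    kcompCM h (kcompCM g f) = kcompCM (kcompCM h g) f := by
  funext x
  ext u
  simp only [mem_kcompCM]
  constructor
  · rintro ⟨ψ, ⟨φ, hφ, hψ⟩, hu⟩
    obtain ⟨γ, hγ, rfl⟩ := exists_eq_sum_smul_of_mem_kextCM hg hψ
    rw [← kextCM_kextCM hh] at hu
    exact ⟨φ, hφ, kextCM_mono (fun y => Set.subset_iUnion₂_of_subset (γ y) (hγ y) subset_rfl)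
      φ hu⟩
  · rintro ⟨φ, hφ, hu⟩
    obtain ⟨v, hv, rfl⟩ := exists_eq_sum_smul_of_mem_kextCM
      (nonempty_kcompCM (fun z => (hh z).1) hg) hu
    choose γ hγ hvγ using fun y => mem_kcompCM.1 (hv y)
    refine ⟨_, ⟨φ, hφ, sum_smul_mem_kextCM fun y _ => hγ y⟩, ?_⟩
    rw [← kextCM_kextCM hh]
    exact sum_smul_mem_kextCM fun y _ => hvγ y

end KleisliComposition

section KleisliPowers

variable {X : Type*} {β : X → Set (M X)}

theorem nonempty_kpowCM (hβ : ∀ x, (β x).Nonempty) : ∀ n x, (kpowCM β n x).Nonempty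
  | 0, _ => Set.singleton_nonempty _
  | n + 1, x => nonempty_kcompCM hβ (nonempty_kpowCM hβ n) x

theorem convex_kpowCM (hβ : ∀ x, (β x).Nonempty ∧ Convex ℝ≥0 (β x)) :
    ∀ n x, Convex ℝ≥0 (kpowCM β n x)
  | 0, _ => convex_singleton _
  | n + 1, x => convex_kcompCM hβ (convex_kpowCM hβ n x)

theorem kpowCM_succ' (hβ : ∀ x, (β x).Nonempty ∧ Convex ℝ≥0 (β x)) :
    ∀ n, kpowCM β (n + 1) = kcompCM (kpowCM β n) β
  | 0 => (kcompCM_oneCM β).trans (oneCM_kcompCM β).symm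
  | n + 1 => by
    change kcompCM β (kpowCM β (n + 1)) = kcompCM (kcompCM β (kpowCM β n)) β
    rw [kpowCM_succ' hβ n, kcompCM_assoc β hβ (nonempty_kpowCM (fun x => (hβ x).1) n)]

end KleisliPowers

section Saturation

variable {X : Type*} {α : X → Set (M X)}

theorem orOne_eq_convexJoin (hα : ∀ x, (α x).Nonempty ∧ Convex ℝ≥0 (α x)) (x : X) :
    orOne α x = convexJoin ℝ≥0 (α x) {Finsupp.single x 1} :=
  (hα x).2.convexHull_union₀ (convex_singleton _) (hα x).1 (Set.singleton_nonempty _)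

theorem nonempty_convex_orOne (α : X → Set (M X)) (x : X) :
    (orOne α x).Nonempty ∧ Convex ℝ≥0 (orOne α x) :=
  ⟨⟨_, subset_convexHull ℝ≥0 _ (Set.mem_union_right _ rfl)⟩, convex_convexHull ℝ≥0 _⟩

theorem Steps.mem_kpowCM {n : ℕ} {x : X} {ψ : M X} (h : Steps α n x ψ) :
    ψ ∈ kpowCM (orOne α) n x := by
  induction h with
  | zero x => rfl
  | @succ n x φ hφ ψ _ ψ' _ p hp ihψ ihψ' =>
    have hmix : p • φ + (1 - p) • Finsupp.single x 1 ∈ orOne α x :=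
      (nonempty_convex_orOne α x).2 (subset_convexHull ℝ≥0 _ (Set.mem_union_left _ hφ))
        (subset_convexHull ℝ≥0 _ (Set.mem_union_right _ rfl)) zero_le zero_le
        (add_tsub_cancel_of_le hp)
    have hpow y : (kpowCM (orOne α) n y).Nonempty ∧ Convex ℝ≥0 (kpowCM (orOne α) n y) :=
      ⟨nonempty_kpowCM (fun y => (nonempty_convex_orOne α y).1) n y,
        convex_kpowCM (nonempty_convex_orOne α) n y⟩
    rw [kpowCM_succ' (nonempty_convex_orOne α)]
    refine mem_kcompCM.2 ⟨_, hmix, add_smul_kextCM_subset hpow _ _ _ _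
      (Set.add_mem_add (Set.smul_mem_smul_set (sum_smul_mem_kextCM ihψ))
        (Set.smul_mem_smul_set ?_))⟩
    rwa [kextCM_single]

theorem Steps.of_mem_kpowCM (hα : ∀ x, (α x).Nonempty ∧ Convex ℝ≥0 (α x)) :
    ∀ {n : ℕ} {x : X} {ψ : M X}, ψ ∈ kpowCM (orOne α) n x → Steps α n x ψ
  | 0, x, _, rfl => Steps.zero x
  | n + 1, x, ψ, h => by
    rw [kpowCM_succ' (nonempty_convex_orOne α)] at h
    obtain ⟨χ, hχ, hψ⟩ := mem_kcompCM.1 h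
    obtain ⟨e, he, rfl⟩ := exists_eq_sum_smul_of_mem_kextCM
      (nonempty_kpowCM (fun y => (nonempty_convex_orOne α y).1) n) hψ
    rw [orOne_eq_convexJoin hα, mem_convexJoin] at hχ
    obtain ⟨φ, hφ, _, rfl, p, q, -, -, hpq, rfl⟩ := hχ
    obtain rfl : q = 1 - p := (tsub_eq_of_eq_add_rev hpq.symm).symm
    have hsum : ∑ y ∈ (p • φ + (1 - p) • Finsupp.single x 1 : M X).support,
        (p • φ + (1 - p) • Finsupp.single x 1 : M X) y • e y =
        p • (∑ y ∈ φ.support, φ y • e y) + (1 - p) • e x := by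
      simp only [← Finsupp.sum.eq_1 (g := fun y c => c • e y), ← Finsupp.linearCombination_apply,
        map_add, map_smul, Finsupp.linearCombination_single, one_smul]
    rw [hsum]
    exact Steps.succ φ hφ e (fun y _ => of_mem_kpowCM hα (he y)) (of_mem_kpowCM hα (he x)) p
      (le_of_add_le_left hpq.le)

end Saturation

/-- For a `CM`-coalgebra `α` with non-empty convex values: `x ⇒_α ψ` iff `ψ ∈ α*(x)`,
where `α*(x) = ⋃ₙ (α ∨ 1)ⁿ(x)`. -/
theorem steps_iff_mem_saturation {X : Type*} (α : X → Set (M X))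
    (hα : ∀ x, (α x).Nonempty ∧ Convex ℝ≥0 (α x)) (x : X) (ψ : M X) :
    (∃ n, Steps α n x ψ) ↔ ψ ∈ ⋃ n, kpowCM (orOne α) n x := by
  rw [Set.mem_iUnion]
  exact exists_congr fun _ => ⟨Steps.mem_kpowCM, Steps.of_mem_kpowCM hα⟩
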